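/- arXiv:2512.17872 — 2 statements merged into one kernel-verified Lean document; each statement's English description precedes it below -/
import Mathlib

section
/- Let U ⊂ ℝ^n be open bounded convex, f ∈ C^1(U̅), ω ≥ 0 with ∫_U ω = 1, and t ≥ 1. Then for every x ∈ U, |f(x) − ∫_U f ω dy|^t ≤ ∫_U ω(y) |y − x|^{t-1} ∫_0^{|y−x|} |df_{x + sθ(x,y)}(θ(x,y))|^t ds dy, where θ(x,y) = (y − x)/|y − x|. -/
/-! Writing `f y - f x` as the integral of `df` along the segment from `x` to `y`, which lies in
`U` by convexity, and applying Jensen's inequality for `u ↦ u ^ t` twice, for the probability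
measures `ω(y) dy` on `U` and `ds / |y - x|` on `[0, |y - x|]`, gives the bound. -/

open MeasureTheory Set ENNReal

/-- Hölder's inequality with exponents `t` and `t / (t - 1)`, applied to `H w^{1/t}` and
`w^{1 - 1/t}`. -/
theorem ENNReal.rpow_lintegral_mul_le {α : Type*} [MeasurableSpace α] {μ : Measure α}
    {H w : α → ℝ≥0∞} (hH : AEMeasurable H μ) (hw : AEMeasurable w μ) {t : ℝ} (ht : 1 ≤ t) :
    (∫⁻ a, H a * w a ∂μ) ^ t ≤ (∫⁻ a, w a ∂μ) ^ (t - 1) * ∫⁻ a, H a ^ t * w a ∂μ := by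
  rcases ht.eq_or_lt with rfl | ht_gt
  · simp
  have hpq : t.HolderConjugate (Real.conjExponent t) := .conjExponent ht_gt
  set q := Real.conjExponent t
  have ht0 : 0 < t := hpq.pos
  have hq0 : 0 < q := hpq.symm.pos
  have hsum : 1 / t + 1 / q = 1 := by simpa only [one_div] using hpq.inv_add_inv_eq_one
  have hHolder := ENNReal.lintegral_mul_le_Lp_mul_Lq μ hpq
    (f := fun a => H a * w a ^ (1 / t)) (g := fun a => w a ^ (1 / q))
    (hH.mul (hw.pow_const _)) (hw.pow_const _)
  have hprod (a : α) : H a * w a ^ (1 / t) * w a ^ (1 / q) = H a * w a := by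
    rw [mul_assoc, ← ENNReal.rpow_add_of_nonneg _ _ (by positivity) (by positivity), hsum,
      ENNReal.rpow_one]
  have hleft (a : α) : (H a * w a ^ (1 / t)) ^ t = H a ^ t * w a := by
    rw [ENNReal.mul_rpow_of_nonneg _ _ ht0.le, ← ENNReal.rpow_mul, one_div_mul_cancel ht0.ne',
      ENNReal.rpow_one]
  have hright (a : α) : (w a ^ (1 / q)) ^ q = w a := by
    rw [← ENNReal.rpow_mul, one_div_mul_cancel hq0.ne', ENNReal.rpow_one]
  simp only [Pi.mul_apply, hprod, hleft, hright] at hHolder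
  have hexp : 1 / q * t = t - 1 := by
    rw [hpq.conjugate_eq]
    field_simp
  calc (∫⁻ a, H a * w a ∂μ) ^ t
      ≤ ((∫⁻ a, H a ^ t * w a ∂μ) ^ (1 / t) * (∫⁻ a, w a ∂μ) ^ (1 / q)) ^ t :=
        ENNReal.rpow_le_rpow hHolder ht0.le
    _ = (∫⁻ a, w a ∂μ) ^ (t - 1) * ∫⁻ a, H a ^ t * w a ∂μ := by
        rw [ENNReal.mul_rpow_of_nonneg _ _ ht0.le, ← ENNReal.rpow_mul, ← ENNReal.rpow_mul,
          one_div_mul_cancel ht0.ne', ENNReal.rpow_one, hexp, mul_comm]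

theorem enorm_sub_integral_mul_le {α : Type*} [MeasurableSpace α] {μ : Measure α}
    {f ω : α → ℝ} (hω : ∀ a, 0 ≤ ω a) (hω_int : Integrable ω μ) (hω1 : ∫ a, ω a ∂μ = 1)
    (hfω : Integrable (fun a => f a * ω a) μ) (c : ℝ) :
    ‖c - ∫ a, f a * ω a ∂μ‖ₑ ≤ ∫⁻ a, ‖c - f a‖ₑ * ENNReal.ofReal (ω a) ∂μ := by
  have hmean : c - ∫ a, f a * ω a ∂μ = ∫ a, (c - f a) * ω a ∂μ := by
    simp only [sub_mul]
    rw [integral_sub (hω_int.const_mul c) hfω, integral_const_mul, hω1, mul_one]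
  rw [hmean]
  refine (enorm_integral_le_lintegral_enorm _).trans_eq (lintegral_congr fun a => ?_)
  rw [enorm_mul, Real.enorm_of_nonneg (hω a)]

theorem enorm_sub_integral_mul_rpow_le {α : Type*} [MeasurableSpace α] {μ : Measure α}
    {f ω : α → ℝ} (hω : ∀ a, 0 ≤ ω a) (hω_int : Integrable ω μ) (hω1 : ∫ a, ω a ∂μ = 1)
    (hfω : Integrable (fun a => f a * ω a) μ) (hf : AEMeasurable f μ) (c : ℝ) {t : ℝ}
    (ht : 1 ≤ t) :
    ‖c - ∫ a, f a * ω a ∂μ‖ₑ ^ t ≤ ∫⁻ a, ‖c - f a‖ₑ ^ t * ENNReal.ofReal (ω a) ∂μ := by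
  have hw : ∫⁻ a, ENNReal.ofReal (ω a) ∂μ = 1 := by
    rw [← ofReal_integral_eq_lintegral_ofReal hω_int (ae_of_all _ hω), hω1, ENNReal.ofReal_one]
  have hJensen := ENNReal.rpow_lintegral_mul_le
    (aemeasurable_const (b := c) |>.sub hf).enorm hω_int.aemeasurable.ennreal_ofReal ht
  rw [hw, ENNReal.one_rpow, one_mul] at hJensen
  exact (ENNReal.rpow_le_rpow (enorm_sub_integral_mul_le hω hω_int hω1 hfω c)
    (by linarith)).trans hJensen

section

variable {E F : Type*} [NormedAddCommGroup E] [NormedSpace ℝ E] [NormedAddCommGroup F]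
  [NormedSpace ℝ F]

theorem ContDiffOn.continuousOn_fderivWithin_interior {f : E → F} {s : Set E}
    (hf : ContDiffOn ℝ 1 f s) : ContinuousOn (fderivWithin ℝ f s) (interior s) := by
  intro z hz
  refine ContinuousAt.continuousWithinAt <|
    ((hf.contDiffAt (mem_interior_iff_mem_nhds.mp hz)).continuousAt_fderiv one_ne_zero).congr ?_
  filter_upwards [isOpen_interior.mem_nhds hz] with w hw
  exact (fderivWithin_of_mem_nhds (mem_interior_iff_mem_nhds.mp hw)).symm

theorem enorm_sub_le_lintegral_fderivWithin_along {f : E → F} {s : Set E}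
    (hf : ContDiffOn ℝ 1 f s) {x v : E} {r : ℝ} (hr : 0 ≤ r)
    (hline : ∀ τ ∈ Icc 0 r, x + τ • v ∈ interior s) :
    ‖f (x + r • v) - f x‖ₑ ≤ ∫⁻ τ in Ioc 0 r, ‖fderivWithin ℝ f s (x + τ • v) v‖ₑ := by
  have hL (τ : ℝ) : HasDerivAt (fun τ : ℝ => x + τ • v) v τ := by
    simpa using ((hasDerivAt_id τ).smul_const v).const_add x
  have hg : ContDiffOn ℝ 1 (fun τ : ℝ => f (x + τ • v)) (Icc 0 r) :=
    hf.comp (by fun_prop) fun τ hτ => interior_subset (hline τ hτ)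
  have hderiv : ∀ τ ∈ Icc 0 r,
      deriv (fun τ : ℝ => f (x + τ • v)) τ = fderivWithin ℝ f s (x + τ • v) v := by
    intro τ hτ
    have hnhds : s ∈ nhds (x + τ • v) := mem_interior_iff_mem_nhds.mp (hline τ hτ)
    have hdiff : DifferentiableAt ℝ f (x + τ • v) :=
      (hf.contDiffAt hnhds).differentiableAt one_ne_zero
    rw [fderivWithin_of_mem_nhds hnhds]
    exact (hdiff.hasFDerivAt.comp_hasDerivAt τ (hL τ)).deriv
  simpa [restrict_Ioc_eq_restrict_Icc, setLIntegral_congr_fun measurableSet_Icc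
    fun τ hτ => congrArg _ (hderiv τ hτ)] using
    enorm_sub_le_lintegral_deriv_of_contDiffOn_Icc hg hr

theorem enorm_sub_rpow_le_lintegral_fderivWithin {f : E → ℝ} {s : Set E}
    (hf : ContDiffOn ℝ 1 f s) {x y : E} (hxy : segment ℝ x y ⊆ interior s) {t : ℝ}
    (ht : 1 ≤ t) :
    ‖f x - f y‖ₑ ^ t ≤ ENNReal.ofReal (‖y - x‖ ^ (t - 1)) *
      ∫⁻ τ in Ioc 0 ‖y - x‖,
        ENNReal.ofReal (|fderivWithin ℝ f s (x + τ • (‖y - x‖⁻¹ • (y - x)))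
          (‖y - x‖⁻¹ • (y - x))| ^ t) := by
  rcases eq_or_ne y x with rfl | hyx
  · simp [ENNReal.zero_rpow_of_pos (zero_lt_one.trans_le ht)]
  set r := ‖y - x‖
  have hr : 0 < r := norm_pos_iff.mpr (sub_ne_zero.mpr hyx)
  set θ := r⁻¹ • (y - x)
  have hpoint (τ : ℝ) : x + τ • θ = x + (τ / r) • (y - x) := by
    simp only [θ, smul_smul, div_eq_mul_inv]
  have hend : x + r • θ = y := by
    rw [hpoint, div_self hr.ne', one_smul, add_sub_cancel]
  have hmem : ∀ τ ∈ Icc 0 r, x + τ • θ ∈ interior s := fun τ hτ =>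
    hxy <| (segment_eq_image' ℝ x y).symm ▸
      ⟨τ / r, ⟨div_nonneg hτ.1 hr.le, div_le_one_of_le₀ hτ.2 hr.le⟩, (hpoint τ).symm⟩
  have hG : AEMeasurable (fun τ => ‖fderivWithin ℝ f s (x + τ • θ) θ‖ₑ)
      (volume.restrict (Ioc 0 r)) := by
    have hcont : ContinuousOn (fun τ : ℝ => fderivWithin ℝ f s (x + τ • θ) θ) (Ioc 0 r) :=
      ((hf.continuousOn_fderivWithin_interior.comp (by fun_prop)
        fun τ hτ => hmem τ (Ioc_subset_Icc_self hτ)).clm_apply continuousOn_const)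
    exact (hcont.enorm.aestronglyMeasurable measurableSet_Ioc).aemeasurable
  have hJensen := ENNReal.rpow_lintegral_mul_le hG aemeasurable_const ht (w := fun _ => 1)
  simp only [mul_one, setLIntegral_const, Real.volume_Ioc, sub_zero, one_mul] at hJensen
  calc ‖f x - f y‖ₑ ^ t = ‖f (x + r • θ) - f x‖ₑ ^ t := by rw [hend, enorm_sub_rev]
    _ ≤ (∫⁻ τ in Ioc 0 r, ‖fderivWithin ℝ f s (x + τ • θ) θ‖ₑ) ^ t :=
        ENNReal.rpow_le_rpow (enorm_sub_le_lintegral_fderivWithin_along hf hr.le hmem)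
          (by linarith)
    _ ≤ _ := hJensen
    _ = _ := by
        rw [ENNReal.ofReal_rpow_of_nonneg hr.le (by linarith)]
        simp only [Real.enorm_eq_ofReal_abs,
          ENNReal.ofReal_rpow_of_nonneg (abs_nonneg _) (by linarith : (0 : ℝ) ≤ t)]

end

theorem stmt7_general (n : ℕ) (U : Set (EuclideanSpace ℝ (Fin n)))
    (hUo : IsOpen U) (hUb : Bornology.IsBounded U) (hUc : Convex ℝ U)
    (f ω : EuclideanSpace ℝ (Fin n) → ℝ)
    (hf : ContDiffOn ℝ 1 f (closure U))
    (hω : ∀ x, 0 ≤ ω x) (hω1 : (∫ y in U, ω y) = 1)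
    (t : ℝ) (ht : 1 ≤ t) :
    ∀ x ∈ U,
      ENNReal.ofReal (|f x - ∫ y in U, f y * ω y| ^ t) ≤
        ∫⁻ y in U, ENNReal.ofReal (ω y * ‖y - x‖ ^ (t - 1)) *
          ∫⁻ s in Set.Ioc (0 : ℝ) ‖y - x‖,
            ENNReal.ofReal
              (|fderivWithin ℝ f (closure U) (x + s • (‖y - x‖⁻¹ • (y - x)))
                  (‖y - x‖⁻¹ • (y - x))| ^ t) := by
  intro x hx
  have hfU : ContinuousOn f U := hf.continuousOn.mono subset_closure
  have hω_int : IntegrableOn ω U := by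
    by_contra h
    simp [integral_undef h] at hω1
  obtain ⟨C, hC⟩ := hUb.isCompact_closure.exists_bound_of_continuousOn hf.continuousOn
  have hfω : IntegrableOn (fun y => f y * ω y) U :=
    hω_int.bdd_mul (hfU.aestronglyMeasurable hUo.measurableSet)
      (ae_restrict_of_forall_mem hUo.measurableSet fun y hy => hC y (subset_closure hy))
  have hseg (y : EuclideanSpace ℝ (Fin n)) (hy : y ∈ U) : segment ℝ x y ⊆ interior (closure U) :=
    (hUc.segment_subset hx hy).trans (interior_maximal subset_closure hUo)
  rw [← ENNReal.ofReal_rpow_of_nonneg (abs_nonneg _) (by linarith), ← Real.enorm_eq_ofReal_abs]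
  calc _ ≤ ∫⁻ y in U, ‖f x - f y‖ₑ ^ t * ENNReal.ofReal (ω y) :=
        enorm_sub_integral_mul_rpow_le hω hω_int hω1 hfω
          (hfU.aestronglyMeasurable hUo.measurableSet).aemeasurable _ ht
    _ ≤ _ := setLIntegral_mono' hUo.measurableSet fun y hy => by
        rw [ENNReal.ofReal_mul (hω y), mul_comm, mul_assoc]
        gcongr
        exact enorm_sub_rpow_le_lintegral_fderivWithin hf (hseg y hy) ht

/-- Pointwise Jensen bound: for `f ∈ C¹(closure U)` on an open bounded
convex `U`, a probability density `ω` on `U` and `t ≥ 1`, for every `x ∈ U`,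
`|f(x) - ∫ f ω|^t ≤ ∫ ω(y) |y-x|^{t-1} ∫₀^{|y-x|} |df_{x+sθ}(θ)|^t ds dy`, where
`θ = (y-x)/|y-x|`. -/
theorem stmt7 (n : ℕ) (hn : 1 ≤ n) (U : Set (EuclideanSpace ℝ (Fin n)))
    (hUo : IsOpen U) (hUb : Bornology.IsBounded U) (hUc : Convex ℝ U)
    (f ω : EuclideanSpace ℝ (Fin n) → ℝ)
    (hf : ContDiffOn ℝ 1 f (closure U))
    (hω : ∀ x, 0 ≤ ω x) (hω1 : (∫ y in U, ω y) = 1)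
    (t : ℝ) (ht : 1 ≤ t) :
    ∀ x ∈ U,
      ENNReal.ofReal (|f x - ∫ y in U, f y * ω y| ^ t) ≤
        ∫⁻ y in U, ENNReal.ofReal (ω y * ‖y - x‖ ^ (t - 1)) *
          ∫⁻ s in Set.Ioc (0 : ℝ) ‖y - x‖,
            ENNReal.ofReal
              (|fderivWithin ℝ f (closure U) (x + s • (‖y - x‖⁻¹ • (y - x)))
                  (‖y - x‖⁻¹ • (y - x))| ^ t) :=
  stmt7_general n U hUo hUb hUc f ω hf hω hω1 t ht
end

section
/- Let U ⊂ ℝ^n be open bounded with smooth boundary, 1 ≤ t < p < p' ≤ ∞ and θ ∈ (0,1) with 1/p = θ/t + (1−θ)/p'. Suppose g ∈ L^{p'}(U) satisfies the Sobolev-type bound ‖g‖_{L^{p'}} ≤ s(‖dg‖_{L^p} + ‖g‖_{L^p}) and the Poincaré-type bound ‖g‖_{L^t} ≤ A ‖dg‖_{L^p} for some constants s, A > 0. Then ‖g‖_{L^{p'}} ≤ 2s(1 + θ (2s(1−θ))^{(1−θ)/θ} A) ‖dg‖_{L^p}. -/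
open MeasureTheory Set ENNReal

/-- A set `U` has smooth boundary: near each point of its frontier, `U` is the strict
sublevel set of a smooth function with non-vanishing differential. -/
def HasSmoothBoundary {E : Type*} [NormedAddCommGroup E] [NormedSpace ℝ E] (U : Set E) : Prop :=
  ∀ x ∈ frontier U, ∃ φ : E → ℝ, ContDiff ℝ (⊤ : ℕ∞) φ ∧ fderiv ℝ φ x ≠ 0 ∧
    ∀ᶠ y in nhds x, (y ∈ U ↔ φ y < 0)

/-- Interpolation (Lyapunov) inequality for `eLpNorm`, proved via Hölder. -/
lemma interp_eLpNorm {α : Type*} [MeasurableSpace α] (μ : Measure α)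
    (g : α → ℝ) (hgm : AEStronglyMeasurable g μ)
    (t p : ℝ) (p' : ℝ≥0∞) (θ : ℝ) (ht : 0 < t) (hp : 0 < p)
    (hθ : θ ∈ Set.Ioo (0 : ℝ) 1)
    (hinterp : ENNReal.ofReal (1 / p) = ENNReal.ofReal (θ / t) + ENNReal.ofReal (1 - θ) / p') :
    eLpNorm g (ENNReal.ofReal p) μ ≤
      eLpNorm g (ENNReal.ofReal t) μ ^ θ * eLpNorm g p' μ ^ (1 - θ) := by
  obtain ⟨hθ0, hθ1⟩ := hθ
  have h1θ : 0 < 1 - θ := by linarith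
  set u : ℝ≥0∞ := ENNReal.ofReal t / ENNReal.ofReal θ with hu
  set r : ℝ≥0∞ := p' / ENNReal.ofReal (1 - θ) with hr
  have hθne : ENNReal.ofReal θ ≠ 0 := by simp [ENNReal.ofReal_eq_zero]; linarith
  have h1θne : ENNReal.ofReal (1 - θ) ≠ 0 := by simp [ENNReal.ofReal_eq_zero]; linarith
  have htne : ENNReal.ofReal t ≠ 0 := by simp [ENNReal.ofReal_eq_zero]; linarith
  -- continuity of rpow with nonnegative exponent
  have hcont : ∀ q : ℝ, 0 ≤ q → Continuous (fun y : ℝ => y ^ q) := fun q hq =>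
    Real.continuous_rpow_const hq
  have hf1 : AEStronglyMeasurable (fun x => ‖g x‖ ^ θ) μ :=
    (hcont θ hθ0.le).comp_aestronglyMeasurable hgm.norm
  have hf2 : AEStronglyMeasurable (fun x => ‖g x‖ ^ (1 - θ)) μ :=
    (hcont (1 - θ) h1θ.le).comp_aestronglyMeasurable hgm.norm
  have hexp : 1 / ENNReal.ofReal p = 1 / u + 1 / r := by
    rw [hu, hr, one_div, one_div, one_div, ENNReal.inv_div (Or.inl ENNReal.ofReal_ne_top)
      (Or.inl hθne), ENNReal.inv_div (Or.inl ENNReal.ofReal_ne_top) (Or.inl h1θne),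
      ← ENNReal.ofReal_div_of_pos ht, ← ENNReal.ofReal_inv_of_pos hp, ← one_div]
    exact hinterp
  have hhold : eLpNorm (fun x => (fun (a b : ℝ) => a * b) (‖g x‖ ^ θ) (‖g x‖ ^ (1 - θ)))
      (ENNReal.ofReal p) μ ≤ eLpNorm (fun x => ‖g x‖ ^ θ) u μ * eLpNorm (fun x => ‖g x‖ ^ (1 - θ)) r μ := by
    haveI : ENNReal.HolderTriple u r (ENNReal.ofReal p) := ⟨by simpa only [one_div] using hexp.symm⟩
    have := eLpNorm_le_eLpNorm_mul_eLpNorm'_of_norm (p := u) (q := r) (r := ENNReal.ofReal p)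
      hf1 hf2 (fun a b => a * b) 1
      (Filter.Eventually.of_forall (fun x => by simp [norm_mul]))
    rwa [ENNReal.coe_one, one_mul] at this
  have hfun : (fun x => (fun (a b : ℝ) => a * b) (‖g x‖ ^ θ) (‖g x‖ ^ (1 - θ)))
      = fun x => ‖g x‖ := by
    funext x
    simp only
    rw [← Real.rpow_add_of_nonneg (norm_nonneg _) hθ0.le h1θ.le]
    norm_num
  rw [hfun, eLpNorm_norm] at hhold
  have h1 : eLpNorm (fun x => ‖g x‖ ^ θ) u μ = eLpNorm g (ENNReal.ofReal t) μ ^ θ := by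
    rw [eLpNorm_norm_rpow g hθ0, hu, ENNReal.div_mul_cancel hθne ENNReal.ofReal_ne_top]
  have h2 : eLpNorm (fun x => ‖g x‖ ^ (1 - θ)) r μ = eLpNorm g p' μ ^ (1 - θ) := by
    rw [eLpNorm_norm_rpow g h1θ, hr, ENNReal.div_mul_cancel h1θne ENNReal.ofReal_ne_top]
  rwa [h1, h2] at hhold

/-- Interpolation/absorption: if `1 ≤ t < p < p' ≤ ∞`,
`1/p = θ/t + (1-θ)/p'`, and `g` satisfies the Sobolev-type bound
`‖g‖_{p'} ≤ s(‖dg‖_p + ‖g‖_p)` and the Poincaré-type bound `‖g‖_t ≤ A ‖dg‖_p`, then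
`‖g‖_{p'} ≤ 2s(1 + θ (2s(1-θ))^{(1-θ)/θ} A) ‖dg‖_p`. -/
theorem stmt9 (n : ℕ) (U : Set (EuclideanSpace ℝ (Fin n)))
    (hUo : IsOpen U) (hUb : Bornology.IsBounded U) (hUsm : HasSmoothBoundary U)
    (t p : ℝ) (p' : ℝ≥0∞) (θ s A : ℝ)
    (ht1 : 1 ≤ t) (htp : t < p) (hpp' : ENNReal.ofReal p < p')
    (hθ : θ ∈ Set.Ioo (0 : ℝ) 1)
    (hinterp : ENNReal.ofReal (1 / p) = ENNReal.ofReal (θ / t) + ENNReal.ofReal (1 - θ) / p')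
    (hs : 0 < s) (hA : 0 < A)
    (g : EuclideanSpace ℝ (Fin n) → ℝ)
    (hg : ∀ x ∈ U, DifferentiableAt ℝ g x)
    (hgp' : MemLp g p' (volume.restrict U))
    (hSob : eLpNorm g p' (volume.restrict U) ≤
      ENNReal.ofReal s *
        (eLpNorm (fun x => ‖fderiv ℝ g x‖) (ENNReal.ofReal p) (volume.restrict U) +
          eLpNorm g (ENNReal.ofReal p) (volume.restrict U)))
    (hPoin : eLpNorm g (ENNReal.ofReal t) (volume.restrict U) ≤
      ENNReal.ofReal A *
        eLpNorm (fun x => ‖fderiv ℝ g x‖) (ENNReal.ofReal p) (volume.restrict U)) :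
    eLpNorm g p' (volume.restrict U) ≤
      ENNReal.ofReal (2 * s * (1 + θ * (2 * s * (1 - θ)) ^ ((1 - θ) / θ) * A)) *
        eLpNorm (fun x => ‖fderiv ℝ g x‖) (ENNReal.ofReal p) (volume.restrict U) := by
  obtain ⟨hθ0, hθ1⟩ := hθ
  have h1θ : 0 < 1 - θ := by linarith
  set μ := volume.restrict U
  set G := eLpNorm g p' μ with hGdef
  set D := eLpNorm (fun x => ‖fderiv ℝ g x‖) (ENNReal.ofReal p) μ with hDdef
  set P := eLpNorm g (ENNReal.ofReal p) μ with hPdef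
  set T := eLpNorm g (ENNReal.ofReal t) μ with hTdef
  set c : ℝ := (2 * s * (1 - θ)) ^ ((1 - θ) / θ) with hc
  have hcpos : 0 < c := Real.rpow_pos_of_pos (by positivity) _
  have hCpos : 0 < 2 * s * (1 + θ * c * A) := by positivity
  -- trivial case `D = ∞`
  by_cases hDtop : D = ∞
  · rw [hDtop, ENNReal.mul_top (by simp [ENNReal.ofReal_eq_zero]; linarith)]
    exact le_top
  -- case `D = 0`: then `T = 0`, so `g = 0` a.e., so `G = 0`
  by_cases hD0 : D = 0
  · have hT0 : T = 0 := le_antisymm (by rw [hD0] at hPoin; simpa using hPoin) zero_le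
    have hg0 : g =ᵐ[μ] 0 := by
      rw [hTdef] at hT0
      exact (eLpNorm_eq_zero_iff hgp'.1 (by simp [ENNReal.ofReal_eq_zero]; linarith)).mp hT0
    have : G = 0 := by rw [hGdef, eLpNorm_congr_ae hg0, eLpNorm_zero]
    simp [this]
  -- main case
  have hGtop : G ≠ ∞ := hgp'.2.ne
  have hinterpP : P ≤ T ^ θ * G ^ (1 - θ) :=
    interp_eLpNorm μ g hgp'.1 t p p' θ (by linarith) (by linarith) ⟨hθ0, hθ1⟩ hinterp
  have hTtop : T ≠ ∞ :=
    (lt_of_le_of_lt hPoin (ENNReal.mul_lt_top ENNReal.ofReal_lt_top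
      (lt_top_iff_ne_top.mpr hDtop))).ne
  have hPtop : P ≠ ∞ := by
    refine (lt_of_le_of_lt hinterpP (ENNReal.mul_lt_top ?_ ?_)).ne
    · exact ENNReal.rpow_lt_top_of_nonneg hθ0.le hTtop
    · exact ENNReal.rpow_lt_top_of_nonneg h1θ.le hGtop
  -- pass to real numbers
  have hGr : G.toReal ≤ s * (D.toReal + P.toReal) := by
    have := ENNReal.toReal_mono (by
      exact ENNReal.mul_ne_top ENNReal.ofReal_ne_top
        (ENNReal.add_ne_top.mpr ⟨hDtop, hPtop⟩)) hSob
    rwa [ENNReal.toReal_mul, ENNReal.toReal_add hDtop hPtop,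
      ENNReal.toReal_ofReal hs.le] at this
  have hTr : T.toReal ≤ A * D.toReal := by
    have := ENNReal.toReal_mono (ENNReal.mul_ne_top ENNReal.ofReal_ne_top hDtop) hPoin
    rwa [ENNReal.toReal_mul, ENNReal.toReal_ofReal hA.le] at this
  have hPr : P.toReal ≤ T.toReal ^ θ * G.toReal ^ (1 - θ) := by
    have := ENNReal.toReal_mono (by
      exact ENNReal.mul_ne_top (ENNReal.rpow_lt_top_of_nonneg hθ0.le hTtop).ne
        (ENNReal.rpow_lt_top_of_nonneg h1θ.le hGtop).ne) hinterpP
    rwa [ENNReal.toReal_mul, ← ENNReal.toReal_rpow, ← ENNReal.toReal_rpow] at this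
  -- Young's inequality with the right scaling
  set ε : ℝ := (2 * s * (1 - θ))⁻¹ with hε
  have hεpos : 0 < ε := by positivity
  have hYoung : T.toReal ^ θ * G.toReal ^ (1 - θ) ≤
      θ * (c * T.toReal) + (1 - θ) * (ε * G.toReal) := by
    have hkey := Real.geom_mean_le_arith_mean2_weighted hθ0.le h1θ.le
      (by positivity : (0:ℝ) ≤ c * T.toReal) (by positivity : (0:ℝ) ≤ ε * G.toReal)
      (by ring)
    have hprod : (c * T.toReal) ^ θ * (ε * G.toReal) ^ (1 - θ)
        = T.toReal ^ θ * G.toReal ^ (1 - θ) := by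
      rw [Real.mul_rpow hcpos.le ENNReal.toReal_nonneg,
        Real.mul_rpow hεpos.le ENNReal.toReal_nonneg]
      have hcθ : c ^ θ * ε ^ (1 - θ) = 1 := by
        have hBnn : (0:ℝ) ≤ 2 * s * (1 - θ) := by positivity
        have hdiv : (1 - θ) / θ * θ = 1 - θ := div_mul_cancel₀ _ (ne_of_gt hθ0)
        rw [hc, hε, ← Real.rpow_mul hBnn, hdiv, Real.inv_rpow hBnn,
          mul_inv_cancel₀ (ne_of_gt (Real.rpow_pos_of_pos (by positivity) _))]
      calc (c ^ θ * T.toReal ^ θ) * (ε ^ (1 - θ) * G.toReal ^ (1 - θ))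
          = (c ^ θ * ε ^ (1 - θ)) * (T.toReal ^ θ * G.toReal ^ (1 - θ)) := by ring
        _ = T.toReal ^ θ * G.toReal ^ (1 - θ) := by rw [hcθ, one_mul]
    linarith [hkey, hprod.ge, hprod.le]
  -- absorption
  have habs : G.toReal ≤ 2 * s * (1 + θ * c * A) * D.toReal := by
    have hsε : s * ((1 - θ) * ε) = 1 / 2 := by
      rw [hε]; field_simp
    have hDnn : (0:ℝ) ≤ D.toReal := ENNReal.toReal_nonneg
    have hchain : G.toReal ≤ s * D.toReal + s * (θ * (c * (A * D.toReal)))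
        + s * ((1 - θ) * ε) * G.toReal := by
      have h1 : G.toReal ≤ s * (D.toReal + (θ * (c * T.toReal) + (1 - θ) * (ε * G.toReal))) := by
        calc G.toReal ≤ s * (D.toReal + P.toReal) := hGr
          _ ≤ _ := by
              have : P.toReal ≤ θ * (c * T.toReal) + (1 - θ) * (ε * G.toReal) :=
                hPr.trans hYoung
              nlinarith
      have h2 : θ * (c * T.toReal) ≤ θ * (c * (A * D.toReal)) := by
        have : c * T.toReal ≤ c * (A * D.toReal) := by nlinarith
        nlinarith
      nlinarith
    rw [hsε] at hchain
    nlinarith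
  -- back to `ℝ≥0∞`
  have hG : G = ENNReal.ofReal G.toReal := (ENNReal.ofReal_toReal hGtop).symm
  have hD : D = ENNReal.ofReal D.toReal := (ENNReal.ofReal_toReal hDtop).symm
  calc G = ENNReal.ofReal G.toReal := hG
    _ ≤ ENNReal.ofReal (2 * s * (1 + θ * c * A) * D.toReal) := ENNReal.ofReal_le_ofReal habs
    _ = ENNReal.ofReal (2 * s * (1 + θ * c * A)) * ENNReal.ofReal D.toReal :=
        ENNReal.ofReal_mul hCpos.le
    _ = ENNReal.ofReal (2 * s * (1 + θ * c * A)) * D := by rw [← hD]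
end
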